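/- arXiv:2009.13128 — 2 statements merged into one kernel-verified Lean document; each statement's English description precedes it below -/
import Mathlib

section
/- Let D = (n, ι, P) be a finite Markov chain with target set T and let λ ∈ [0,1] be a real number. Form the chain D' by adding three fresh states ι', t★ and ⊥, taking ι' as the new initial state, with transitions P'(ι', ι) = 1/2, P'(ι', t★) = (1 − λ)/2, P'(ι', ⊥) = λ/2, self-loops of probability 1 at t★ and ⊥, and all other transitions as in D. Then Pr_{D'}(◇(T ∪ {t★})) = (Pr_D(◇T) + 1 − λ)/2, and consequently for each relation ⋈ ∈ {<, ≤, ≥, >}: Pr_{D'}(◇(T ∪ {t★})) ⋈ 1/2 if and only if Pr_D(◇T) ⋈ λ. -/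
/-!
A hitting path of the extended chain from `ι'` with nonzero mass is either the single step
`ι' → t★`, of mass `(1 - λ)/2`, or the step `ι' → ι` of mass `1/2` followed by a hitting path of
the original chain: the original states are closed under positive transitions, and `⊥` is
absorbing without being a target. Hence `Pr_{D'}(◇(T ∪ {t★})) = (1 - λ)/2 + Pr_D(◇T)/2`, and the
threshold equivalences are linear arithmetic.

Splitting the sum this way needs the masses of hitting paths to be summable. Hitting paths from a
fixed state are prefix-free, and extending the members of a finite prefix-free family to a common
length `N` in all possible ways embeds their total mass into that of all paths of length `N`,
which is `1`.
-/

/-- A finite path in state space `S`: a length `m` together with `m + 1` states. -/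
abbrev MCPath (S : Type) : Type := Σ m : ℕ, Fin (m + 1) → S

/-- The mass of a path: the product of the transition probabilities along it. -/
def pathMass {S : Type} (P : S → S → ℝ) (π : MCPath S) : ℝ :=
  ∏ i : Fin π.1, P (π.2 i.castSucc) (π.2 i.succ)

/-- A hitting path from `s` to `T`: it starts in `s`, ends in `T`, and no proper prefix
visits `T`. -/
def IsHitting {S : Type} (T : Set S) (s : S) (π : MCPath S) : Prop :=
  π.2 0 = s ∧ π.2 (Fin.last π.1) ∈ T ∧ ∀ i : Fin π.1, π.2 i.castSucc ∉ T

/-- The reachability probability `Pr_{P,s}(◇T)`: the sum of the masses of all hitting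
paths from `s` to `T`. -/
noncomputable def reachProb {S : Type} (P : S → S → ℝ) (T : Set S) (s : S) : ℝ :=
  ∑' π : {π : MCPath S // IsHitting T s π}, pathMass P π.1

/-- The fixed-threshold gadget: extend a chain with transition matrix `P` and initial state
`ι` by three fresh states `ι' = inr 0`, `t★ = inr 1` and `⊥ = inr 2`, where `ι'` moves to `ι`
with probability `1/2`, to `t★` with probability `(1 - lam)/2` and to `⊥` with probability
`lam/2`, and `t★`, `⊥` carry probability-one self-loops. -/
noncomputable def extP {n : ℕ} (P : Fin n → Fin n → ℝ) (ι : Fin n) (lam : ℝ) :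
    (Fin n ⊕ Fin 3) → (Fin n ⊕ Fin 3) → ℝ
  | .inl a, .inl b => P a b
  | .inl _, .inr _ => 0
  | .inr i, .inl b => if i = 0 ∧ b = ι then 1 / 2 else 0
  | .inr i, .inr j =>
      if i = 0 ∧ j = 1 then (1 - lam) / 2
      else if i = 0 ∧ j = 2 then lam / 2
      else if i = 1 ∧ j = 1 then 1
      else if i = 2 ∧ j = 2 then 1
      else 0

namespace MCPath

variable {S S' : Type}

def nil (s : S) : MCPath S := ⟨0, fun _ => s⟩

def cons (s : S) (π : MCPath S) : MCPath S := ⟨π.1 + 1, Fin.cons s π.2⟩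

def map (f : S → S') (π : MCPath S) : MCPath S' := ⟨π.1, f ∘ π.2⟩

@[simp] lemma nil_snd (s : S) (i : Fin ((nil s).1 + 1)) : (nil s).2 i = s := rfl

@[simp] lemma map_snd (f : S → S') (π : MCPath S) (i : Fin ((π.map f).1 + 1)) :
    (π.map f).2 i = f (π.2 i) := rfl

def steps (π : MCPath S) : List S := List.ofFn fun i : Fin π.1 => π.2 i.succ

lemma ofFn_eq_cons_steps (π : MCPath S) : List.ofFn π.2 = π.2 0 :: π.steps :=
  List.ofFn_succ

lemma length_steps (π : MCPath S) : π.steps.length = π.1 :=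
  List.length_ofFn

@[simp] lemma steps_cons (s : S) (π : MCPath S) : (π.cons s).steps = π.2 0 :: π.steps :=
  List.ofFn_succ

@[simp] lemma steps_map (f : S → S') (π : MCPath S) : (π.map f).steps = π.steps.map f := by
  simp only [steps, map, List.map_ofFn]; rfl

lemma ext_steps {π π' : MCPath S} (h0 : π.2 0 = π'.2 0) (h : π.steps = π'.steps) : π = π' := by
  obtain ⟨m, v⟩ := π
  obtain ⟨m', v'⟩ := π'
  obtain rfl : m = m' := by simpa [length_steps] using congrArg List.length h
  have hv : List.ofFn v = List.ofFn v' := by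
    rw [ofFn_eq_cons_steps ⟨m, v⟩, ofFn_eq_cons_steps ⟨m, v'⟩, h0, h]
  rw [List.ofFn_injective hv]

lemma mk_succ_eq_cons {m : ℕ} (v : Fin (m + 2) → S) :
    (⟨m + 1, v⟩ : MCPath S) = cons (v 0) ⟨m, Fin.tail v⟩ := by
  simp only [cons, Fin.cons_self_tail]

lemma cons_injective (s : S) : Function.Injective (cons s) := fun π π' h => by
  obtain ⟨h0, h⟩ : π.2 0 = π'.2 0 ∧ π.steps = π'.steps := by simpa using congrArg steps h
  exact ext_steps h0 h

lemma map_injective {f : S → S'} (hf : Function.Injective f) : Function.Injective (map f) :=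
  fun π π' h => ext_steps (hf (congrArg (fun π => π.2 0) h))
    (List.map_injective_iff.2 hf (by simpa using congrArg steps h))

lemma exists_eq_map_of_mem_range {f : S → S'} {π : MCPath S'} (h : ∀ i, π.2 i ∈ Set.range f) :
    ∃ π' : MCPath S, π = π'.map f := by
  choose w hw using h
  exact ⟨⟨π.1, w⟩, Sigma.ext rfl (heq_of_eq (funext fun i => (hw i).symm))⟩

end MCPath

section Mass

variable {S : Type} (P : S → S → ℝ)

@[simp] lemma pathMass_nil (s : S) : pathMass P (MCPath.nil s) = 1 :=
  Fin.prod_univ_zero _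

lemma pathMass_cons (s : S) (π : MCPath S) :
    pathMass P (π.cons s) = P s (π.2 0) * pathMass P π := by
  rw [pathMass, MCPath.cons, Fin.prod_univ_succ]
  simp only [Fin.castSucc_zero, Fin.cons_zero, Fin.cons_succ, ← Fin.succ_castSucc]
  rfl

lemma pathMass_map {S' : Type} {Q : S' → S' → ℝ} {f : S → S'} (hf : ∀ a b, Q (f a) (f b) = P a b)
    (π : MCPath S) : pathMass Q (π.map f) = pathMass P π :=
  Finset.prod_congr rfl fun _ _ => hf _ _

lemma pathMass_nonneg {P : S → S → ℝ} (hP : ∀ a b, 0 ≤ P a b) (π : MCPath S) :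
    0 ≤ pathMass P π :=
  Finset.prod_nonneg fun _ _ => hP _ _

lemma mem_of_pathMass_ne_zero {P : S → S → ℝ} {C : Set S} (hC : ∀ a ∈ C, ∀ b, P a b ≠ 0 → b ∈ C)
    {π : MCPath S} (hπ : pathMass P π ≠ 0) (h0 : π.2 0 ∈ C) (i : Fin (π.1 + 1)) : π.2 i ∈ C := by
  induction i using Fin.induction with
  | zero => exact h0
  | succ i ih => exact hC _ ih _ (Finset.prod_ne_zero_iff.mp hπ i (Finset.mem_univ i))

/-- The mass of the path that starts in `s` and then visits the states of `l` in order. -/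
def listMass : S → List S → ℝ
  | _, [] => 1
  | s, a :: l => P s a * listMass a l

lemma listMass_nonneg {P : S → S → ℝ} (hP : ∀ a b, 0 ≤ P a b) :
    ∀ (s : S) (l : List S), 0 ≤ listMass P s l
  | _, [] => zero_le_one
  | s, a :: l => mul_nonneg (hP s a) (listMass_nonneg hP a l)

lemma listMass_append : ∀ (s : S) (l l' : List S),
    listMass P s (l ++ l') = listMass P s l * listMass P (l.getLastD s) l'
  | s, [], l' => by simp [listMass]
  | s, a :: l, l' => by
    simp only [List.cons_append, listMass, listMass_append a l l', List.getLastD_cons, mul_assoc]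

lemma pathMass_eq_listMass (π : MCPath S) : pathMass P π = listMass P (π.2 0) π.steps := by
  obtain ⟨m, v⟩ := π
  induction m with
  | zero => rfl
  | succ m ih =>
    rw [MCPath.mk_succ_eq_cons, pathMass_cons, ih, MCPath.steps_cons]
    rfl

variable [Fintype S] {P}

lemma sum_listMass_ofFn (hrow : ∀ s, ∑ s', P s s' = 1) :
    ∀ (N : ℕ) (s : S), ∑ f : Fin N → S, listMass P s (List.ofFn f) = 1
  | 0, s => by simp [listMass]
  | N + 1, s => by
    rw [← (Fin.consEquiv fun _ => S).sum_comp, Fintype.sum_prod_type]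
    simp only [Fin.consEquiv_apply, List.ofFn_succ, Fin.cons_zero, Fin.cons_succ, listMass,
      ← Finset.mul_sum, sum_listMass_ofFn hrow N, mul_one, hrow]

lemma sum_listMass_append_ofFn (hrow : ∀ s, ∑ s', P s s' = 1) (s : S) (l : List S) (k : ℕ) :
    ∑ f : Fin k → S, listMass P s (l ++ List.ofFn f) = listMass P s l := by
  simp only [listMass_append, ← Finset.mul_sum, sum_listMass_ofFn hrow, mul_one]

end Mass

section Hitting

variable {S : Type} {T : Set S} {s : S}

lemma isHitting_nil_iff {t : S} : IsHitting T s (MCPath.nil t) ↔ t = s ∧ t ∈ T := by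
  simp [IsHitting, MCPath.nil]

lemma isHitting_cons_iff {t : S} {π : MCPath S} :
    IsHitting T s (π.cons t) ↔ t = s ∧ t ∉ T ∧ IsHitting T (π.2 0) π := by
  simp only [IsHitting, MCPath.cons, Fin.forall_fin_succ, Fin.castSucc_zero, Fin.cons_zero,
    ← Fin.succ_castSucc, Fin.cons_succ, ← Fin.succ_last, true_and]
  tauto

lemma IsHitting.eq_nil {π : MCPath S} (h : IsHitting T s π) (hs : s ∈ T) :
    π = MCPath.nil s := by
  obtain ⟨m, v⟩ := π
  cases m with
  | zero => exact MCPath.ext_steps h.1 rfl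
  | succ m => exact absurd (h.1 ▸ hs) (h.2.2 0)

lemma IsHitting.exists_eq_cons {π : MCPath S} (h : IsHitting T s π) (hs : s ∉ T) :
    ∃ π', π = π'.cons s ∧ IsHitting T (π'.2 0) π' := by
  obtain ⟨m, v⟩ := π
  cases m with
  | zero => exact absurd (h.1 ▸ h.2.1) hs
  | succ m =>
    rw [MCPath.mk_succ_eq_cons, isHitting_cons_iff] at h
    exact ⟨_, h.1 ▸ MCPath.mk_succ_eq_cons v, h.2.2⟩

lemma isHitting_map_iff {S' : Type} {f : S → S'} (hf : Function.Injective f) {T' : Set S'}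
    {π : MCPath S} : IsHitting T' (f s) (π.map f) ↔ IsHitting (f ⁻¹' T') s π := by
  simp only [IsHitting, MCPath.map, Function.comp_apply, Set.mem_preimage]
  exact and_congr_left' hf.eq_iff

lemma IsHitting.eq_of_steps_prefix {π π' : MCPath S} (h : IsHitting T s π)
    (h' : IsHitting T s π') (hp : π.steps <+: π'.steps) : π = π' := by
  have hp' : List.ofFn π.2 <+: List.ofFn π'.2 := by
    rw [MCPath.ofFn_eq_cons_steps, MCPath.ofFn_eq_cons_steps, h.1, h'.1]
    exact List.cons_prefix_cons.2 ⟨rfl, hp⟩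
  have hlen : π.1 = π'.1 := by
    refine (by simpa [MCPath.length_steps] using hp.length_le : π.1 ≤ π'.1).eq_of_not_lt
      fun hlt => h'.2.2 ⟨π.1, hlt⟩ ?_
    have := hp'.getElem (i := π.1) (by simp)
    simp only [List.getElem_ofFn] at this
    exact this ▸ h.2.1
  exact MCPath.ext_steps (h.1.trans h'.1.symm)
    (hp.eq_of_length (by simp [MCPath.length_steps, hlen]))

end Hitting

section Summable

variable {S : Type} [Fintype S] {P : S → S → ℝ}

lemma sum_listMass_le_one_of_prefixFree (hP : ∀ a b, 0 ≤ P a b) (hrow : ∀ s, ∑ s', P s s' = 1)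
    (s : S) (u : Finset (List S)) (hu : ∀ l ∈ u, ∀ l' ∈ u, l <+: l' → l = l') :
    ∑ l ∈ u, listMass P s l ≤ 1 := by
  classical
  set N := u.sup List.length
  let ext : (Σ l : List S, Fin (N - l.length) → S) → List S := fun x => x.1 ++ List.ofFn x.2
  let t := u.sigma fun l => (Finset.univ : Finset (Fin (N - l.length) → S))
  have hext_inj : Set.InjOn ext t := by
    rintro ⟨l, f⟩ hl ⟨l', f'⟩ hl' h
    simp only [t, Finset.coe_sigma, Set.mem_sigma_iff, Finset.mem_coe] at hl hl'
    have h : l ++ List.ofFn f = l' ++ List.ofFn f' := h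
    have hpre := List.prefix_or_prefix_of_prefix (List.prefix_append l _)
      (h.symm ▸ List.prefix_append l' _)
    obtain rfl : l = l' := hpre.elim (hu l hl.1 l' hl'.1) fun h => (hu l' hl'.1 l hl.1 h).symm
    rw [List.ofFn_injective (List.append_cancel_left h)]
  have hext_mem : ∀ x ∈ t, ext x ∈ Finset.univ.image (List.ofFn : (Fin N → S) → List S) := by
    rintro ⟨l, f⟩ hl
    have hlen : (ext ⟨l, f⟩).length = N := by
      have : l.length ≤ N := Finset.le_sup (f := List.length) (Finset.mem_sigma.1 hl).1
      simp only [ext, List.length_append, List.length_ofFn]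
      omega
    exact Finset.mem_image.2 ⟨fun i => (ext ⟨l, f⟩)[i.1], Finset.mem_univ _,
      List.ext_getElem (by simp [hlen]) fun _ _ _ => List.getElem_ofFn ..⟩
  calc ∑ l ∈ u, listMass P s l
      = ∑ l ∈ u, ∑ f : Fin (N - l.length) → S, listMass P s (l ++ List.ofFn f) := by
        simp only [sum_listMass_append_ofFn hrow]
    _ = ∑ l ∈ t.image ext, listMass P s l := by rw [Finset.sum_image hext_inj, Finset.sum_sigma]
    _ ≤ ∑ l ∈ Finset.univ.image (List.ofFn : (Fin N → S) → List S), listMass P s l :=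
        Finset.sum_le_sum_of_subset_of_nonneg (Finset.image_subset_iff.2 hext_mem)
          fun _ _ _ => listMass_nonneg hP s _
    _ = 1 := by
        rw [Finset.sum_image fun _ _ _ _ h => List.ofFn_injective h, sum_listMass_ofFn hrow]

lemma summable_pathMass_hitting (hP : ∀ a b, 0 ≤ P a b) (hrow : ∀ s, ∑ s', P s s' = 1)
    (T : Set S) (s : S) :
    Summable fun π : {π : MCPath S // IsHitting T s π} => pathMass P π.1 := by
  classical
  refine summable_of_sum_le (c := 1) (fun π => pathMass_nonneg hP π.1) fun u => ?_
  have hinj : Set.InjOn (fun π : {π // IsHitting T s π} => π.1.steps) u :=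
    fun π _ π' _ (h : π.1.steps = π'.1.steps) =>
      Subtype.ext (π.2.eq_of_steps_prefix π'.2 (h ▸ List.prefix_refl _))
  calc ∑ π ∈ u, pathMass P π.1
      = ∑ π ∈ u, listMass P s π.1.steps :=
        Finset.sum_congr rfl fun π _ => by rw [pathMass_eq_listMass, π.2.1]
    _ = ∑ l ∈ u.image fun π => π.1.steps, listMass P s l := (Finset.sum_image hinj).symm
    _ ≤ 1 := sum_listMass_le_one_of_prefixFree hP hrow s _ <| by
        simp only [Finset.mem_image]
        rintro _ ⟨π, -, rfl⟩ _ ⟨π', -, rfl⟩ h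
        rw [π.2.eq_of_steps_prefix π'.2 h]

end Summable

section Gadget

variable {n : ℕ} (P : Fin n → Fin n → ℝ) (ι : Fin n) (lam : ℝ) (T : Set (Fin n))

/-- The target `T ∪ {t★}` of the extended chain. -/
def extTarget : Set (Fin n ⊕ Fin 3) := Sum.inl '' T ∪ {Sum.inr 1}

lemma preimage_inl_extTarget : Sum.inl ⁻¹' extTarget T = T := by
  ext a
  simp [extTarget]

lemma inr_mem_extTarget_iff {j : Fin 3} : (Sum.inr j : Fin n ⊕ Fin 3) ∈ extTarget T ↔ j = 1 := by
  simp [extTarget]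

/-- The path `ι' → t★`. -/
def directPath (n : ℕ) : MCPath (Fin n ⊕ Fin 3) := (MCPath.nil (Sum.inr 1)).cons (Sum.inr 0)

/-- A path of the original chain, entered from `ι'`. -/
def liftPath (π : MCPath (Fin n)) : MCPath (Fin n ⊕ Fin 3) := (π.map Sum.inl).cons (Sum.inr 0)

variable {P ι lam T}

lemma isHitting_directPath : IsHitting (extTarget T) (Sum.inr 0) (directPath n) := by
  simp [directPath, isHitting_cons_iff, isHitting_nil_iff, inr_mem_extTarget_iff]

lemma isHitting_liftPath {π : MCPath (Fin n)} (h : IsHitting T ι π) :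
    IsHitting (extTarget T) (Sum.inr 0) (liftPath π) := by
  have hmap : IsHitting (extTarget T) (Sum.inl (π.2 0)) (π.map Sum.inl) :=
    (isHitting_map_iff Sum.inl_injective).2 (by rwa [preimage_inl_extTarget, h.1])
  exact isHitting_cons_iff.2 ⟨rfl, by simp [inr_mem_extTarget_iff], hmap⟩

lemma liftPath_injective : Function.Injective (liftPath (n := n)) :=
  (MCPath.cons_injective _).comp (MCPath.map_injective Sum.inl_injective)

lemma liftPath_ne_directPath (π : MCPath (Fin n)) : liftPath π ≠ directPath n := fun h => by
  simpa [liftPath, directPath, MCPath.map, MCPath.nil] using congrArg MCPath.steps h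

lemma pathMass_directPath : pathMass (extP P ι lam) (directPath n) = (1 - lam) / 2 := by
  rw [directPath, pathMass_cons, pathMass_nil]
  simp [MCPath.nil, extP]

lemma pathMass_liftPath {π : MCPath (Fin n)} (h0 : π.2 0 = ι) :
    pathMass (extP P ι lam) (liftPath π) = pathMass P π / 2 := by
  rw [liftPath, pathMass_cons, pathMass_map (Q := extP P ι lam) (f := Sum.inl) P fun _ _ => rfl]
  simp only [MCPath.map_snd, extP]
  rw [if_pos ⟨trivial, h0⟩]
  ring

lemma eq_of_extP_inr_zero_ne_zero {y : Fin n ⊕ Fin 3} (h : extP P ι lam (Sum.inr 0) y ≠ 0) :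
    y = Sum.inl ι ∨ y = Sum.inr 1 ∨ y = Sum.inr 2 := by
  rcases y with b | j
  · by_cases hb : b = ι <;> simp_all [extP]
  · fin_cases j <;> simp_all [extP]

lemma mem_range_inl_of_extP_ne_zero {a : Fin n} {y : Fin n ⊕ Fin 3}
    (h : extP P ι lam (Sum.inl a) y ≠ 0) :
    y ∈ Set.range Sum.inl := by
  rcases y with b | j
  · exact ⟨b, rfl⟩
  · simp [extP] at h

lemma eq_inr_two_of_extP_ne_zero {y : Fin n ⊕ Fin 3} (h : extP P ι lam (Sum.inr 2) y ≠ 0) :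
    y = Sum.inr 2 := by
  rcases y with b | j
  · simp [extP] at h
  · fin_cases j <;> simp_all [extP]

lemma IsHitting.eq_directPath_or_liftPath {x : MCPath (Fin n ⊕ Fin 3)}
    (hx : IsHitting (extTarget T) (Sum.inr 0) x) (hm : pathMass (extP P ι lam) x ≠ 0) :
    x = directPath n ∨ ∃ π, IsHitting T ι π ∧ x = liftPath π := by
  obtain ⟨y, rfl, hy⟩ := hx.exists_eq_cons (by simp [inr_mem_extTarget_iff])
  rw [pathMass_cons, mul_ne_zero_iff] at hm
  rcases eq_of_extP_inr_zero_ne_zero hm.1 with h | h | h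
  · obtain ⟨π, rfl⟩ := MCPath.exists_eq_map_of_mem_range (f := Sum.inl)
      (mem_of_pathMass_ne_zero (C := Set.range Sum.inl)
        (fun _ ⟨_, ha⟩ _ hb => mem_range_inl_of_extP_ne_zero (ha ▸ hb)) hm.2
        (by rw [h]; exact Set.mem_range_self ι))
    rw [h] at hy
    have hπ := (isHitting_map_iff Sum.inl_injective).1 hy
    rw [preimage_inl_extTarget] at hπ
    exact Or.inr ⟨π, hπ, rfl⟩
  · rw [h] at hy
    left
    rw [hy.eq_nil ((inr_mem_extTarget_iff T).2 rfl), directPath]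
  · have hlast := mem_of_pathMass_ne_zero (C := {Sum.inr 2})
      (fun _ ha _ hb => eq_inr_two_of_extP_ne_zero (ha ▸ hb)) hm.2 h (Fin.last _)
    have := hy.2.1
    rw [Set.mem_singleton_iff.1 hlast, inr_mem_extTarget_iff] at this
    exact absurd this (by decide)

end Gadget

theorem hasSum_pathMass_extP_hitting {n : ℕ} {P : Fin n → Fin n → ℝ} {ι : Fin n} (lam : ℝ)
    (hpos : ∀ s s', 0 ≤ P s s') (hrow : ∀ s, ∑ s', P s s' = 1) (T : Set (Fin n)) :
    HasSum (fun x : {x // IsHitting (extTarget T) (Sum.inr 0) x} => pathMass (extP P ι lam) x.1)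
      ((1 - lam) / 2 + reachProb P T ι / 2) := by
  let g : Unit ⊕ {π // IsHitting T ι π} → {x // IsHitting (extTarget T) (Sum.inr 0) x} :=
    Sum.elim (fun _ => ⟨directPath n, isHitting_directPath⟩)
      fun π => ⟨liftPath π.1, isHitting_liftPath π.2⟩
  have hg : Function.Injective g := by
    rintro (⟨⟩ | π) (⟨⟩ | π') h <;> simp only [g, Sum.elim_inl, Sum.elim_inr, Subtype.mk.injEq] at h
    · rfl
    · exact absurd h.symm (liftPath_ne_directPath _)
    · exact absurd h (liftPath_ne_directPath _)
    · rw [Subtype.ext (liftPath_injective h)]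
  have hsupp : ∀ x ∉ Set.range g, pathMass (extP P ι lam) x.1 = 0 := by
    intro x hx
    by_contra hm
    rcases x.2.eq_directPath_or_liftPath hm with h | ⟨π, hπ, h⟩
    · exact hx ⟨Sum.inl (), Subtype.ext h.symm⟩
    · exact hx ⟨Sum.inr ⟨π, hπ⟩, Subtype.ext h.symm⟩
  refine (hg.hasSum_iff hsupp).1 (HasSum.sum ?_ ?_)
  · exact pathMass_directPath (P := P) ▸ hasSum_unique _
  · have := ((summable_pathMass_hitting hpos hrow T ι).hasSum).div_const 2
    refine this.congr_fun fun π => ?_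
    simp [g, pathMass_liftPath π.2.1]

theorem reachProb_extP {n : ℕ} {P : Fin n → Fin n → ℝ} (ι : Fin n) (lam : ℝ)
    (hpos : ∀ s s', 0 ≤ P s s') (hrow : ∀ s, ∑ s', P s s' = 1) (T : Set (Fin n)) :
    reachProb (extP P ι lam) (extTarget T) (Sum.inr 0) = (reachProb P T ι + 1 - lam) / 2 := by
  rw [reachProb, (hasSum_pathMass_extP_hitting lam hpos hrow T).tsum_eq]
  ring

theorem extP_reachProb_and_threshold_general {n : ℕ} (P : Fin n → Fin n → ℝ) (ι : Fin n)
    (hpos : ∀ s s', 0 ≤ P s s') (hrow : ∀ s, ∑ s', P s s' = 1)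
    (T : Set (Fin n)) (lam : ℝ) :
    reachProb (extP P ι lam) (Sum.inl '' T ∪ {Sum.inr 1}) (Sum.inr 0) =
      (reachProb P T ι + 1 - lam) / 2 ∧
    (reachProb (extP P ι lam) (Sum.inl '' T ∪ {Sum.inr 1}) (Sum.inr 0) < 1 / 2 ↔
      reachProb P T ι < lam) ∧
    (reachProb (extP P ι lam) (Sum.inl '' T ∪ {Sum.inr 1}) (Sum.inr 0) ≤ 1 / 2 ↔
      reachProb P T ι ≤ lam) ∧
    (reachProb (extP P ι lam) (Sum.inl '' T ∪ {Sum.inr 1}) (Sum.inr 0) ≥ 1 / 2 ↔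
      reachProb P T ι ≥ lam) ∧
    (reachProb (extP P ι lam) (Sum.inl '' T ∪ {Sum.inr 1}) (Sum.inr 0) > 1 / 2 ↔
      reachProb P T ι > lam) := by
  have h := reachProb_extP ι lam hpos hrow T
  simp only [extTarget] at h
  refine ⟨h, ?_, ?_, ?_, ?_⟩ <;> rw [h] <;> constructor <;> intro <;> linarith

/-- Fixed-threshold reduction (Section 3.5 of the paper): with `D'` the extended chain,
`Pr_{D'}(◇(T ∪ {t★})) = (Pr_D(◇T) + 1 - λ)/2`, and consequently for every relation
`⋈ ∈ {<, ≤, ≥, >}`, `Pr_{D'}(◇(T ∪ {t★})) ⋈ 1/2` iff `Pr_D(◇T) ⋈ λ`. -/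
theorem extP_reachProb_and_threshold {n : ℕ} (P : Fin n → Fin n → ℝ) (ι : Fin n)
    (hpos : ∀ s s', 0 ≤ P s s') (hrow : ∀ s, ∑ s', P s s' = 1)
    (T : Set (Fin n)) (lam : ℝ) (hlam : lam ∈ Set.Icc (0 : ℝ) 1) :
    reachProb (extP P ι lam) (Sum.inl '' T ∪ {Sum.inr 1}) (Sum.inr 0) =
      (reachProb P T ι + 1 - lam) / 2 ∧
    (reachProb (extP P ι lam) (Sum.inl '' T ∪ {Sum.inr 1}) (Sum.inr 0) < 1 / 2 ↔
      reachProb P T ι < lam) ∧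
    (reachProb (extP P ι lam) (Sum.inl '' T ∪ {Sum.inr 1}) (Sum.inr 0) ≤ 1 / 2 ↔
      reachProb P T ι ≤ lam) ∧
    (reachProb (extP P ι lam) (Sum.inl '' T ∪ {Sum.inr 1}) (Sum.inr 0) ≥ 1 / 2 ↔
      reachProb P T ι ≥ lam) ∧
    (reachProb (extP P ι lam) (Sum.inl '' T ∪ {Sum.inr 1}) (Sum.inr 0) > 1 / 2 ↔
      reachProb P T ι > lam) :=
  extP_reachProb_and_threshold_general P ι hpos hrow T lam
end

section
/- Let D = (n, ι, 𝒫) be a simple pMC over a finite parameter set X, and for a well-defined valuation val : X → [0,1] let V(val) := { (s, s') : 𝒫 s s' ≠ 0 and the evaluation of 𝒫 s s' at val equals 0 } be its set of vanishing transitions. Then V(val) = V(val') for all well-defined val, val' such that for every x ∈ X, (val x = 0 ↔ val' x = 0) and (val x = 1 ↔ val' x = 1); consequently the set [0,1]^X of well-defined valuations is partitioned into at most 3^{|X|} sets on each of which the set of vanishing transitions is constant (i.e., at most 3^{|X|} graph-consistent sets). -/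
/-- An entry of a simple pMC: a nonnegative rational constant, a variable `x`, or `1 - x`. -/
def SimpleEntry {X : Type} (p : MvPolynomial X ℚ) : Prop :=
  (∃ q : ℚ, 0 ≤ q ∧ p = MvPolynomial.C q) ∨
  (∃ x : X, p = MvPolynomial.X x) ∨
  (∃ x : X, p = 1 - MvPolynomial.X x)

/-- A simple parametric Markov chain over parameter set `X` with `n` states:
all transition polynomials are simple entries and every row sums to `1` as a polynomial. -/
structure SimplePMC (X : Type) (n : ℕ) where
  init : Fin n
  P : Fin n → Fin n → MvPolynomial X ℚ
  simple : ∀ s s', SimpleEntry (P s s')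
  rowSum : ∀ s, ∑ s', P s s' = 1

/-- A valuation is well-defined if every parameter value lies in `[0,1]`. -/
def WDVal {X : Type} (val : X → ℝ) : Prop := ∀ x, val x ∈ Set.Icc (0 : ℝ) 1

/-- A valuation is graph-preserving if every parameter value lies in `(0,1)`. -/
def GPVal {X : Type} (val : X → ℝ) : Prop := ∀ x, val x ∈ Set.Ioo (0 : ℝ) 1

/-- The transition matrix of the instantiation `D[val]`. -/
noncomputable def instP {X : Type} {n : ℕ} (D : SimplePMC X n) (val : X → ℝ) :
    Fin n → Fin n → ℝ :=
  fun s s' => MvPolynomial.aeval val (D.P s s')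

/-- The set of vanishing transitions of a pMC under a valuation: transitions whose polynomial
is nonzero but evaluates to zero. -/
def Vanish {X S : Type} (P : S → S → MvPolynomial X ℚ) (val : X → ℝ) : Set (S × S) :=
  {e | P e.1 e.2 ≠ 0 ∧ (MvPolynomial.aeval val (P e.1 e.2) : ℝ) = 0}

noncomputable def classify3 (v : ℝ) : Fin 3 :=
  if v = 0 then 0 else if v = 1 then 1 else 2

lemma classify3_eq_iff {v w : ℝ} (h : classify3 v = classify3 w) :
    (v = 0 ↔ w = 0) ∧ (v = 1 ↔ w = 1) := by
  unfold classify3 at h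
  split_ifs at h <;> simp_all

lemma simple_vanish_iff {X : Type} {p : MvPolynomial X ℚ} (hs : SimpleEntry p)
    (hp : p ≠ 0) (val val' : X → ℝ)
    (h : ∀ x, (val x = 0 ↔ val' x = 0) ∧ (val x = 1 ↔ val' x = 1)) :
    (MvPolynomial.aeval val p : ℝ) = 0 ↔ (MvPolynomial.aeval val' p : ℝ) = 0 := by
  rcases hs with ⟨q, hq, rfl⟩ | ⟨x, rfl⟩ | ⟨x, rfl⟩
  · have : q ≠ 0 := fun h0 => hp (by simp [h0])
    simp [MvPolynomial.aeval_C, this]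
  · simpa using (h x).1
  · have := (h x).2
    simp only [map_sub, map_one, MvPolynomial.aeval_X, sub_eq_zero]
    constructor <;> intro h' <;> [exact (this.mp h'.symm).symm; exact (this.mpr h'.symm).symm]

/-- Lemma 2 of the paper, specialized to simple pMCs: the set of vanishing transitions only
depends on which parameters are `0`, which are `1`, and which lie strictly in between;
consequently, the well-defined valuations are partitioned into at most `3 ^ |X|`
graph-consistent sets (indexed by `X → Fin 3`). -/
theorem vanish_graph_consistent_partition {X : Type} [Fintype X] {n : ℕ}
    (D : SimplePMC X n) :
    (∀ val val' : X → ℝ, WDVal val → WDVal val' →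
      (∀ x, (val x = 0 ↔ val' x = 0) ∧ (val x = 1 ↔ val' x = 1)) →
      Vanish D.P val = Vanish D.P val') ∧
    ∃ cell : (X → Fin 3) → Set (X → ℝ),
      (⋃ c, cell c) = {val | WDVal val} ∧
      (Pairwise fun c c' => Disjoint (cell c) (cell c')) ∧
      (∀ c, ∀ val ∈ cell c, ∀ val' ∈ cell c, Vanish D.P val = Vanish D.P val') := by
  have main : ∀ val val' : X → ℝ,
      (∀ x, (val x = 0 ↔ val' x = 0) ∧ (val x = 1 ↔ val' x = 1)) →
      Vanish D.P val = Vanish D.P val' := by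
    intro val val' h
    ext e
    constructor <;> intro ⟨hne, hz⟩ <;> refine ⟨hne, ?_⟩
    · exact (simple_vanish_iff (D.simple e.1 e.2) hne val val' h).mp hz
    · exact (simple_vanish_iff (D.simple e.1 e.2) hne val val' h).mpr hz
  refine ⟨fun val val' _ _ h => main val val' h,
    fun c => {val | WDVal val ∧ ∀ x, classify3 (val x) = c x}, ?_, ?_, ?_⟩
  · ext val
    simp only [Set.mem_iUnion, Set.mem_setOf_eq]
    exact ⟨fun ⟨c, hc, _⟩ => hc, fun hv => ⟨fun x => classify3 (val x), hv, fun x => rfl⟩⟩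
  · intro c c' hcc
    rw [Set.disjoint_left]
    rintro val ⟨_, hc⟩ ⟨_, hc'⟩
    exact hcc (funext fun x => (hc x).symm.trans (hc' x))
  · rintro c val ⟨_, hc⟩ val' ⟨_, hc'⟩
    exact main val val' fun x => classify3_eq_iff ((hc x).trans (hc' x).symm)
end
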